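/- arXiv:1508.06253 — 3 statements merged into one kernel-verified Lean document; each statement's English description precedes it below -/
import Mathlib

section
/- Let σ : [0,1] → (0,∞) be a left-continuous step function, let J(s) = ∫₀ˢ σ²(r) dr, and let Ĵ denote the concave hull of J on [0,1] (the pointwise infimum of all concave functions on [0,1] dominating J). Then there exists a unique non-increasing left-continuous step function σ̄ : (0,1] → (0,∞) such that Ĵ(s) = ∫₀ˢ σ̄²(r) dr for all s ∈ (0,1]. -/
/-!
The concave hull `Ĵ` is itself a concave majorant of `J`. On a piece `[λᵢ₋₁, λᵢ]`, where `J` is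
affine, `Ĵ` coincides with its chord: the minimum of `Ĵ` and the line through the chord is again a
concave majorant, so it cannot lie below `Ĵ`. Hence `Ĵ` is concave and affine on every piece, its
left derivative is a non-increasing step function, and `σ̄` is the square root of it. The left
derivative is positive because `J(s) ≤ J(1) - m (1 - s)` with `m = min σᵢ²`, and `Ĵ(0) = 0`
because `J(s) ≤ s · max σᵢ²`. Uniqueness holds because a left-continuous step function is
recovered from its primitive: just left of any point `s`, the primitive grows at rate `f(s)`.
-/

open MeasureTheory Set

noncomputable section

/-- A left-continuous step function on `(a, b]`: there is a finite partition
`a = t₀ < t₁ < ... < tₙ = b` such that `f` is constant on each `(tᵢ₋₁, tᵢ]`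
(equal to its value at the right endpoint). -/
def IsLCStep (f : ℝ → ℝ) (a b : ℝ) : Prop :=
  ∃ (n : ℕ) (t : Fin (n + 1) → ℝ), StrictMono t ∧ t 0 = a ∧ t (Fin.last n) = b ∧
    ∀ i : Fin n, ∀ x ∈ Set.Ioc (t i.castSucc) (t i.succ), f x = f (t i.succ)

def AffineOnIcc (F : ℝ → ℝ) (c u v : ℝ) : Prop :=
  ∀ x ∈ Icc u v, F x = F u + c * (x - u)

theorem AffineOnIcc.slope_eq {F : ℝ → ℝ} {c u v x y : ℝ} (hF : AffineOnIcc F c u v)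
    (hx : x ∈ Icc u v) (hy : y ∈ Icc u v) (hxy : x ≠ y) : slope F x y = c := by
  rw [slope_def_field, hF x hx, hF y hy, div_eq_iff (sub_ne_zero.2 hxy.symm)]
  ring

theorem AffineOnIcc.derivWithin_Iio {F : ℝ → ℝ} {c u v x : ℝ} (hF : AffineOnIcc F c u v)
    (hx : x ∈ Ioc u v) : derivWithin F (Iio x) x = c := by
  have hline : HasDerivWithinAt (fun y => F u + c * (y - u)) c (Iio x) x := by
    simpa using (((hasDerivAt_id x).sub_const u).const_mul c).const_add (F u) |>.hasDerivWithinAt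
  refine (hline.congr_of_eventuallyEq ?_ (hF x ⟨hx.1.le, hx.2⟩)).derivWithin
    (uniqueDiffWithinAt_Iio x)
  filter_upwards [Ioo_mem_nhdsLT hx.1] with y hy using hF y ⟨hy.1.le, hy.2.le.trans hx.2⟩

theorem AffineOnIcc.le_chord {F : ℝ → ℝ} {c u v a b : ℝ} (hF : AffineOnIcc F c u v)
    (huv : u < v) (ha : F u ≤ a) (hb : F v ≤ b) {x : ℝ} (hx : x ∈ Icc u v) :
    F x ≤ a + (b - a) / (v - u) * (x - u) := by
  have hvu : 0 < v - u := sub_pos.2 huv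
  have hFv := hF v ⟨huv.le, le_rfl⟩
  rw [hF x hx, ← sub_nonneg]
  have key : a + (b - a) / (v - u) * (x - u) - (F u + c * (x - u)) =
      ((v - x) * (a - F u) + (x - u) * (b - F v)) / (v - u) := by
    rw [hFv]; field_simp; ring
  rw [key]
  exact div_nonneg (add_nonneg (mul_nonneg (by linarith [hx.2]) (by linarith))
    (mul_nonneg (by linarith [hx.1]) (by linarith))) hvu.le

theorem intervalIntegrable_of_eqOn_Ioc {f : ℝ → ℝ} {a b c : ℝ} (hab : a ≤ b)
    (hf : ∀ x ∈ Ioc a b, f x = c) : IntervalIntegrable f volume a b :=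
  (intervalIntegrable_congr (g := fun _ => c) (by rwa [uIoc_of_le hab])).2 intervalIntegrable_const

theorem integral_of_eqOn_Ioc {f : ℝ → ℝ} {a b c : ℝ} (hab : a ≤ b)
    (hf : ∀ x ∈ Ioc a b, f x = c) : ∫ x in a..b, f x = c * (b - a) := by
  rw [intervalIntegral.integral_congr_Ioo_of_le (g := fun _ => c) hab
    fun x hx => hf x (Ioo_subset_Ioc_self hx), intervalIntegral.integral_const, smul_eq_mul,
    mul_comm]

section Partition

variable {n : ℕ} {t : Fin (n + 1) → ℝ} {f : ℝ → ℝ} {c : Fin n → ℝ}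

theorem exists_mem_Ioc_castSucc_succ {x : ℝ} (hx : x ∈ Ioc (t 0) (t (Fin.last n))) :
    ∃ i : Fin n, x ∈ Ioc (t i.castSucc) (t i.succ) := by
  suffices ∀ k, x ≤ t k → ∃ i : Fin n, x ∈ Ioc (t i.castSucc) (t i.succ) from this _ hx.2
  intro k
  induction k using Fin.induction with
  | zero => exact fun h => absurd hx.1 h.not_gt
  | succ i ih => exact fun h => if hi : x ≤ t i.castSucc then ih hi else ⟨i, not_le.1 hi, h⟩

theorem intervalIntegrable_of_eqOn_pieces (ht : Monotone t)
    (hf : ∀ i, ∀ x ∈ Ioc (t i.castSucc) (t i.succ), f x = c i) :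
    ∀ x ∈ Icc (t 0) (t (Fin.last n)), IntervalIntegrable f volume (t 0) x := by
  suffices ∀ k, ∀ x ∈ Icc (t 0) (t k), IntervalIntegrable f volume (t 0) x from this _
  intro k
  induction k using Fin.induction with
  | zero => rintro x ⟨h₁, h₂⟩; rw [le_antisymm h₂ h₁]
  | succ i ih =>
    rintro x ⟨h₁, h₂⟩
    by_cases hi : x ≤ t i.castSucc
    · exact ih x ⟨h₁, hi⟩
    · exact (ih _ ⟨ht (Fin.zero_le _), le_rfl⟩).trans <| intervalIntegrable_of_eqOn_Ioc
        (not_le.1 hi).le fun y hy => hf i y ⟨hy.1, hy.2.trans h₂⟩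

theorem affineOnIcc_integral_of_eqOn_pieces (ht : Monotone t)
    (hf : ∀ i, ∀ x ∈ Ioc (t i.castSucc) (t i.succ), f x = c i) (i : Fin n) :
    AffineOnIcc (fun x => ∫ r in t 0..x, f r) (c i) (t i.castSucc) (t i.succ) := by
  intro x hx
  have hlast : t i.succ ≤ t (Fin.last n) := ht (Fin.le_last _)
  have h₀ : t 0 ≤ t i.castSucc := ht (Fin.zero_le _)
  dsimp only
  rw [← intervalIntegral.integral_add_adjacent_intervals
      (intervalIntegrable_of_eqOn_pieces ht hf _ ⟨h₀, hx.1.trans hx.2 |>.trans hlast⟩)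
      (intervalIntegrable_of_eqOn_Ioc hx.1 fun y hy => hf i y ⟨hy.1, hy.2.trans hx.2⟩),
    integral_of_eqOn_Ioc hx.1 fun y hy => hf i y ⟨hy.1, hy.2.trans hx.2⟩]

theorem eqOn_of_affineOnIcc_pieces (ht : Monotone t) {F G : ℝ → ℝ}
    (hF : ∀ i, AffineOnIcc F (c i) (t i.castSucc) (t i.succ))
    (hG : ∀ i, AffineOnIcc G (c i) (t i.castSucc) (t i.succ)) (h₀ : F (t 0) = G (t 0)) :
    EqOn F G (Icc (t 0) (t (Fin.last n))) := by
  suffices ∀ k, EqOn F G (Icc (t 0) (t k)) from this _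
  intro k
  induction k using Fin.induction with
  | zero => rintro x ⟨h₁, h₂⟩; rwa [le_antisymm h₂ h₁]
  | succ i ih =>
    rintro x ⟨h₁, h₂⟩
    by_cases hi : x ≤ t i.castSucc
    · exact ih ⟨h₁, hi⟩
    · have hx : x ∈ Icc (t i.castSucc) (t i.succ) := ⟨(not_le.1 hi).le, h₂⟩
      rw [hF i x hx, hG i x hx, ih ⟨ht (Fin.zero_le _), le_rfl⟩]

theorem eqOn_add_integral_of_affineOnIcc_pieces (ht : Monotone t) {F : ℝ → ℝ}
    (hF : ∀ i, AffineOnIcc F (c i) (t i.castSucc) (t i.succ))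
    (hf : ∀ i, ∀ x ∈ Ioc (t i.castSucc) (t i.succ), f x = c i) :
    EqOn F (fun x => F (t 0) + ∫ r in t 0..x, f r) (Icc (t 0) (t (Fin.last n))) :=
  eqOn_of_affineOnIcc_pieces ht hF
    (fun i x hx => by simp only [affineOnIcc_integral_of_eqOn_pieces ht hf i x hx, add_assoc])
    (by simp)

end Partition

section ConcaveHull

variable {E : Type*} [AddCommGroup E] [Module ℝ E] {s : Set E} {J g : E → ℝ} {x : E}

-- `sInf` returns junk unless `x ∈ s` and `J` has a concave majorant on `s`.
def concaveHull (s : Set E) (J : E → ℝ) (x : E) : ℝ :=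
  sInf {y : ℝ | ∃ g : E → ℝ, ConcaveOn ℝ s g ∧ (∀ t ∈ s, J t ≤ g t) ∧ y = g x}

theorem concaveHull_le (hg : ConcaveOn ℝ s g) (hJg : ∀ t ∈ s, J t ≤ g t) (hx : x ∈ s) :
    concaveHull s J x ≤ g x :=
  csInf_le ⟨J x, by rintro _ ⟨h, -, hJh, rfl⟩; exact hJh x hx⟩ ⟨g, hg, hJg, rfl⟩

theorem le_concaveHull (hg : ConcaveOn ℝ s g) (hJg : ∀ t ∈ s, J t ≤ g t) (hx : x ∈ s) :
    J x ≤ concaveHull s J x :=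
  le_csInf ⟨g x, g, hg, hJg, rfl⟩ (by rintro _ ⟨h, -, hJh, rfl⟩; exact hJh x hx)

theorem concaveOn_concaveHull (hg : ConcaveOn ℝ s g) (hJg : ∀ t ∈ s, J t ≤ g t) :
    ConcaveOn ℝ s (concaveHull s J) := by
  refine ⟨hg.1, fun x hx y hy a b ha hb hab => le_csInf ⟨_, g, hg, hJg, rfl⟩ ?_⟩
  rintro _ ⟨h, hh, hJh, rfl⟩
  calc a • concaveHull s J x + b • concaveHull s J y ≤ a • h x + b • h y := by
        gcongr <;> exact concaveHull_le hh hJh ‹_›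
    _ ≤ h (a • x + b • y) := hh.2 hx hy ha hb hab

end ConcaveHull

theorem concaveOn_affine {s : Set ℝ} (hs : Convex ℝ s) (p q r : ℝ) :
    ConcaveOn ℝ s fun x => p + q * (x - r) :=
  ⟨hs, fun x _ y _ a b _ _ hab => le_of_eq <| by
    simp only [smul_eq_mul]; linear_combination (p - q * r) * hab⟩

section ConcaveOnReal

variable {S : Set ℝ} {f J : ℝ → ℝ}

theorem concaveHull_eq_of_le_affine (hS : Convex ℝ S) {a q : ℝ} (ha : a ∈ S)
    (hJ : ∀ y ∈ S, J y ≤ J a + q * (y - a)) : concaveHull S J a = J a :=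
  le_antisymm (by simpa using concaveHull_le (concaveOn_affine hS _ q a) hJ ha)
    (le_concaveHull (concaveOn_affine hS _ q a) hJ ha)

theorem le_slope_concaveHull_of_le_affine (hS : Convex ℝ S) {u b q : ℝ} (hu : u ∈ S) (hb : b ∈ S)
    (hub : u < b) (hJ : ∀ y ∈ S, J y ≤ J b + q * (y - b)) : q ≤ slope (concaveHull S J) u b := by
  have hHu := concaveHull_le (concaveOn_affine hS _ q b) hJ hu
  have hHb := le_concaveHull (concaveOn_affine hS _ q b) hJ hb
  rw [slope_def_field, le_div_iff₀ (sub_pos.2 hub)]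
  linarith

theorem ConcaveOn.le_of_notMem_Ioo (hf : ConcaveOn ℝ S f) {u v x : ℝ} (hu : u ∈ S) (hv : v ∈ S)
    (huv : u < v) (hx : x ∈ S) (hxuv : x ∉ Ioo u v) : f x ≤ f u + slope f u v * (x - u) := by
  obtain rfl | hxu := eq_or_ne x u
  · simp
  rcases lt_or_ge x u with hxu' | hux
  · have h := hf.slope_anti hu ⟨hx, hxu⟩ ⟨hv, huv.ne'⟩ (hxu'.trans huv).le
    rw [slope_def_field f u x, le_div_iff_of_neg (sub_neg.2 hxu')] at h
    linarith
  · have hvx : v ≤ x := not_lt.1 fun h => hxuv ⟨hux.lt_of_ne' hxu, h⟩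
    have h := hf.slope_anti hu ⟨hv, huv.ne'⟩ ⟨hx, hxu⟩ hvx
    rw [slope_def_field f u x, div_le_iff₀ (sub_pos.2 (huv.trans_le hvx))] at h
    linarith

theorem ConcaveOn.slope_le_slope (hf : ConcaveOn ℝ S f) {r x r' x' : ℝ} (hr : r ∈ S)
    (hx' : x' ∈ S) (hrx : r < x) (hxr' : x ≤ r') (hr'x' : r' < x') :
    slope f r' x' ≤ slope f r x := by
  have hx : x ∈ S := hf.1.ordConnected.out hr hx' ⟨hrx.le, hxr'.trans hr'x'.le⟩
  have hr' : r' ∈ S := hf.1.ordConnected.out hr hx' ⟨hrx.le.trans hxr', hr'x'.le⟩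
  calc slope f r' x' = slope f x' r' := slope_comm _ _ _
    _ ≤ slope f x' r := hf.slope_anti hx' ⟨hr, (hrx.trans_le hxr').trans hr'x' |>.ne⟩
        ⟨hr', hr'x'.ne⟩ (hrx.le.trans hxr')
    _ = slope f r x' := slope_comm _ _ _
    _ ≤ slope f r x := hf.slope_anti hr ⟨hx, hrx.ne'⟩ ⟨hx', (hrx.trans_le hxr').trans hr'x' |>.ne'⟩
        (hxr'.trans hr'x'.le)

theorem ConcaveOn.antitoneOn_of_slope_eq (hf : ConcaveOn ℝ S f) {T : Set ℝ} {d : ℝ → ℝ}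
    (hT : T ⊆ S) (hd : ∀ x ∈ T, ∃ u ∈ S, u < x ∧ ∀ y ∈ Ico u x, slope f y x = d x) :
    AntitoneOn d T := by
  intro x hx x' hx' hxx'
  obtain rfl | hlt := hxx'.eq_or_lt
  · rfl
  obtain ⟨u, hu, hux, hslope⟩ := hd x hx
  obtain ⟨u', -, hu'x', hslope'⟩ := hd x' hx'
  have hmax : max u' x < x' := max_lt hu'x' hlt
  rw [← hslope u ⟨le_rfl, hux⟩, ← hslope' _ ⟨le_max_left _ _, hmax⟩]
  exact hf.slope_le_slope hu (hT hx') hux (le_max_right _ _) hmax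

theorem concaveHull_affineOnIcc {g : ℝ → ℝ} (hg : ConcaveOn ℝ S g) (hJg : ∀ y ∈ S, J y ≤ g y)
    {c u v : ℝ} (hu : u ∈ S) (hv : v ∈ S) (huv : u < v) (hJ : AffineOnIcc J c u v) :
    AffineOnIcc (concaveHull S J) (slope (concaveHull S J) u v) u v := by
  set H := concaveHull S J
  have hH : ConcaveOn ℝ S H := concaveOn_concaveHull hg hJg
  -- `min H L`, with `L` the line through the chord, is a concave majorant, so `H ≤ L` on `[u, v]`.
  have hJL : ∀ y ∈ S, J y ≤ min (H y) (H u + slope H u v * (y - u)) := by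
    intro y hy
    by_cases hyuv : y ∈ Icc u v
    · refine le_min (le_concaveHull hg hJg hy) ?_
      rw [slope_def_field]
      exact hJ.le_chord huv (le_concaveHull hg hJg hu) (le_concaveHull hg hJg hv) hyuv
    · have hyuv' : y ∉ Ioo u v := fun h => hyuv (Ioo_subset_Icc_self h)
      rw [min_eq_left (hH.le_of_notMem_Ioo hu hv huv hy hyuv')]
      exact le_concaveHull hg hJg hy
  intro x hx
  have hxS : x ∈ S := hg.1.ordConnected.out hu hv hx
  refine le_antisymm ?_ ?_
  · exact (concaveHull_le (hH.inf (concaveOn_affine hg.1 _ _ u)) hJL hxS).trans inf_le_right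
  · obtain rfl | hux := hx.1.eq_or_lt
    · simp
    have h := hH.slope_anti hu ⟨hxS, hux.ne'⟩ ⟨hv, huv.ne'⟩ hx.2
    rw [slope_def_field H u x, le_div_iff₀ (sub_pos.2 hux)] at h
    linarith

end ConcaveOnReal

namespace IsLCStep

variable {f g : ℝ → ℝ} {a b : ℝ}

theorem comp (hf : IsLCStep f a b) (φ : ℝ → ℝ) : IsLCStep (fun x => φ (f x)) a b := by
  obtain ⟨n, t, ht, ht0, ht1, hft⟩ := hf
  exact ⟨n, t, ht, ht0, ht1, fun i x hx => congrArg φ (hft i x hx)⟩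

theorem exists_eqOn_Ioc (hf : IsLCStep f a b) {x : ℝ} (hx : x ∈ Ioc a b) :
    ∃ u ∈ Ico a x, ∀ y ∈ Ioc u x, f y = f x := by
  obtain ⟨n, t, ht, rfl, rfl, hft⟩ := hf
  obtain ⟨i, hi⟩ := exists_mem_Ioc_castSucc_succ hx
  exact ⟨t i.castSucc, ⟨ht.monotone (Fin.zero_le _), hi.1⟩, fun y hy => by
    rw [hft i y ⟨hy.1, hy.2.trans hi.2⟩, hft i x hi]⟩

theorem intervalIntegrable (hf : IsLCStep f a b) :
    ∀ x ∈ Icc a b, IntervalIntegrable f volume a x := by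
  obtain ⟨n, t, ht, rfl, rfl, hft⟩ := hf
  exact intervalIntegrable_of_eqOn_pieces ht.monotone hft

theorem eqOn_of_integral_eq (hf : IsLCStep f a b) (hg : IsLCStep g a b)
    (h : ∀ x ∈ Ioc a b, ∫ r in a..x, f r = ∫ r in a..x, g r) : EqOn f g (Ioc a b) := by
  intro x hx
  obtain ⟨u₁, hu₁, hf₁⟩ := hf.exists_eqOn_Ioc hx
  obtain ⟨u₂, hu₂, hg₂⟩ := hg.exists_eqOn_Ioc hx
  set u := max u₁ u₂
  have hau : a ≤ u := hu₁.1.trans (le_max_left _ _)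
  have hux : u < x := max_lt hu₁.2 hu₂.2
  have hu : u ∈ Icc a b := ⟨hau, hux.le.trans hx.2⟩
  have hx' : x ∈ Icc a b := Ioc_subset_Icc_self hx
  have hint : ∀ y ∈ Icc a b, ∫ r in a..y, f r = ∫ r in a..y, g r := by
    rintro y ⟨hay, hyb⟩
    obtain rfl | hay := hay.eq_or_lt
    · simp
    · exact h y ⟨hay, hyb⟩
  have key : f x * (x - u) = g x * (x - u) := by
    rw [← integral_of_eqOn_Ioc hux.le fun y hy => hf₁ y ⟨(le_max_left _ _).trans_lt hy.1, hy.2⟩,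
      ← integral_of_eqOn_Ioc hux.le fun y hy => hg₂ y ⟨(le_max_right _ _).trans_lt hy.1, hy.2⟩,
      ← intervalIntegral.integral_interval_sub_left (hf.intervalIntegrable x hx')
        (hf.intervalIntegrable u hu),
      ← intervalIntegral.integral_interval_sub_left (hg.intervalIntegrable x hx')
        (hg.intervalIntegrable u hu), hint x hx', hint u hu]
  exact mul_right_cancel₀ (sub_pos.2 hux).ne' key

end IsLCStep

section PiecewiseAffine

variable {n : ℕ} {t : Fin (n + 1) → ℝ} {a b : ℝ} {f F J : ℝ → ℝ} {c : Fin n → ℝ}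

theorem ConcaveOn.antitoneOn_derivWithin_Iio (hF : ConcaveOn ℝ (Icc a b) F) (ht : Monotone t)
    (ht0 : t 0 = a) (ht1 : t (Fin.last n) = b)
    (hFc : ∀ i, AffineOnIcc F (c i) (t i.castSucc) (t i.succ)) :
    AntitoneOn (fun x => derivWithin F (Iio x) x) (Ioc a b) := by
  subst ht0 ht1
  refine hF.antitoneOn_of_slope_eq Ioc_subset_Icc_self fun x hx => ?_
  obtain ⟨i, hi⟩ := exists_mem_Ioc_castSucc_succ hx
  refine ⟨t i.castSucc, ⟨ht (Fin.zero_le _), ht (Fin.le_last _)⟩, hi.1, fun y hy => ?_⟩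
  rw [(hFc i).derivWithin_Iio hi]
  exact (hFc i).slope_eq ⟨hy.1, hy.2.le.trans hi.2⟩ ⟨hi.1.le, hi.2⟩ hy.2.ne

theorem ConcaveOn.derivWithin_Iio_pos (hF : ConcaveOn ℝ (Icc a b) F) (ht : Monotone t)
    (ht0 : t 0 = a) (ht1 : t (Fin.last n) = b)
    (hFc : ∀ i, AffineOnIcc F (c i) (t i.castSucc) (t i.succ))
    (hslope : ∀ u ∈ Ico a b, 0 < slope F u b) : ∀ x ∈ Ioc a b, 0 < derivWithin F (Iio x) x := by
  intro x hx
  have hb : b ∈ Ioc a b := ⟨hx.1.trans_le hx.2, le_rfl⟩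
  obtain ⟨i, hi⟩ := exists_mem_Ioc_castSucc_succ (t := t) (by rwa [ht0, ht1])
  calc 0 < slope F (t i.castSucc) b := hslope _ ⟨ht0 ▸ ht (Fin.zero_le _), hi.1⟩
    _ = c i := (hFc i).slope_eq ⟨le_rfl, hi.1.le.trans hi.2⟩ ⟨hi.1.le, hi.2⟩ hi.1.ne
    _ = derivWithin F (Iio b) b := ((hFc i).derivWithin_Iio hi).symm
    _ ≤ derivWithin F (Iio x) x := hF.antitoneOn_derivWithin_Iio ht ht0 ht1 hFc hx hb hx.2

theorem exists_isLCStep_concaveHull_eq_of_affineOnIcc (ht : StrictMono t) (ht0 : t 0 = a)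
    (ht1 : t (Fin.last n) = b) (hJ : ∀ i, AffineOnIcc J (c i) (t i.castSucc) (t i.succ))
    {m C : ℝ} (hm : 0 < m) (hJa : ∀ y ∈ Icc a b, J y ≤ J a + C * (y - a))
    (hJb : ∀ y ∈ Icc a b, J y ≤ J b + m * (y - b)) :
    ∃ σbar : ℝ → ℝ, IsLCStep σbar a b ∧ AntitoneOn σbar (Ioc a b) ∧
      (∀ x ∈ Ioc a b, 0 < σbar x) ∧
      ∀ x ∈ Ioc a b, concaveHull (Icc a b) J x = J a + ∫ r in a..x, σbar r ^ 2 := by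
  subst ht0 ht1
  set H := concaveHull (Icc (t 0) (t (Fin.last n))) J
  have hconv : Convex ℝ (Icc (t 0) (t (Fin.last n))) := convex_Icc _ _
  have hmem : ∀ k, t k ∈ Icc (t 0) (t (Fin.last n)) := fun k =>
    ⟨ht.monotone (Fin.zero_le k), ht.monotone (Fin.le_last k)⟩
  have hH : ConcaveOn ℝ (Icc (t 0) (t (Fin.last n))) H :=
    concaveOn_concaveHull (concaveOn_affine hconv _ _ _) hJa
  have hHc : ∀ i : Fin n,
      AffineOnIcc H (slope H (t i.castSucc) (t i.succ)) (t i.castSucc) (t i.succ) := fun i =>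
    concaveHull_affineOnIcc (concaveOn_affine hconv _ _ _) hJa (hmem _) (hmem _)
      (ht i.castSucc_lt_succ) (hJ i)
  set d : ℝ → ℝ := fun x => derivWithin H (Iio x) x
  have hd : ∀ i : Fin n, ∀ x ∈ Ioc (t i.castSucc) (t i.succ),
      d x = slope H (t i.castSucc) (t i.succ) := fun i x hx => (hHc i).derivWithin_Iio hx
  have hanti : AntitoneOn d (Ioc (t 0) (t (Fin.last n))) :=
    hH.antitoneOn_derivWithin_Iio ht.monotone rfl rfl hHc
  have hpos : ∀ x ∈ Ioc (t 0) (t (Fin.last n)), 0 < d x :=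
    hH.derivWithin_Iio_pos ht.monotone rfl rfl hHc fun u hu =>
    hm.trans_le (le_slope_concaveHull_of_le_affine hconv (Ico_subset_Icc_self hu) (hmem _) hu.2 hJb)
  have hsq : ∀ i : Fin n, ∀ x ∈ Ioc (t i.castSucc) (t i.succ),
      √(d x) ^ 2 = slope H (t i.castSucc) (t i.succ) := fun i x hx => by
    rw [Real.sq_sqrt (hpos x ⟨(hmem _).1.trans_lt hx.1, hx.2.trans (hmem _).2⟩).le, hd i x hx]
  refine ⟨fun x => √(d x), ⟨n, t, ht, rfl, rfl, fun i x hx => ?_⟩,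
    fun x hx y hy hxy => Real.sqrt_le_sqrt (hanti hx hy hxy),
    fun x hx => Real.sqrt_pos.2 (hpos x hx), fun x hx => ?_⟩
  · simp only [hd i x hx, hd i _ ⟨ht i.castSucc_lt_succ, le_rfl⟩]
  have hHa : H (t 0) = J (t 0) := concaveHull_eq_of_le_affine hconv (hmem 0) hJa
  exact (eqOn_add_integral_of_affineOnIcc_pieces ht.monotone hHc hsq (Ioc_subset_Icc_self hx)).trans
    (by rw [hHa])

theorem exists_bounds_of_eqOn_pieces (hf : ∀ i, ∀ x ∈ Ioc (t i.castSucc) (t i.succ), f x = c i)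
    (hc : ∀ i, 0 < c i) :
    ∃ m C, 0 < m ∧ ∀ x ∈ Ioc (t 0) (t (Fin.last n)), m ≤ f x ∧ f x ≤ C := by
  rcases isEmpty_or_nonempty (Fin n) with hn | hn
  · exact ⟨1, 0, one_pos, fun x hx => (exists_mem_Ioc_castSucc_succ hx).elim fun i _ => hn.elim i⟩
  obtain ⟨i₀, hi₀⟩ := Finite.exists_min c
  obtain ⟨i₁, hi₁⟩ := Finite.exists_max c
  refine ⟨c i₀, c i₁, hc i₀, fun x hx => ?_⟩
  obtain ⟨i, hi⟩ := exists_mem_Ioc_castSucc_succ hx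
  rw [hf i x hi]
  exact ⟨hi₀ i, hi₁ i⟩

theorem exists_affine_majorants_of_eq_integral (ht : Monotone t) (ht0 : t 0 = a)
    (ht1 : t (Fin.last n) = b) (hf : ∀ i, ∀ x ∈ Ioc (t i.castSucc) (t i.succ), f x = c i)
    (hc : ∀ i, 0 < c i) (hJ : ∀ x, J x = ∫ r in a..x, f r) :
    ∃ m C, 0 < m ∧ (∀ y ∈ Icc a b, J y ≤ J a + C * (y - a)) ∧
      ∀ y ∈ Icc a b, J y ≤ J b + m * (y - b) := by
  subst ht0 ht1
  obtain ⟨m, C, hm, hmC⟩ := exists_bounds_of_eqOn_pieces hf hc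
  have hint := intervalIntegrable_of_eqOn_pieces ht hf
  have hlast : t (Fin.last n) ∈ Icc (t 0) (t (Fin.last n)) := ⟨ht (Fin.zero_le _), le_rfl⟩
  refine ⟨m, C, hm, fun y hy => ?_, fun y hy => ?_⟩
  · have := intervalIntegral.integral_mono_on_of_le_Ioo hy.1 (hint y hy) intervalIntegrable_const
      fun r hr => (hmC r ⟨hr.1, hr.2.le.trans hy.2⟩).2
    rw [intervalIntegral.integral_const, smul_eq_mul] at this
    rw [hJ y, hJ (t 0), intervalIntegral.integral_same]
    linarith
  · have := intervalIntegral.integral_mono_on_of_le_Ioo hy.2 intervalIntegrable_const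
      ((hint y hy).symm.trans (hint _ hlast))
      fun r hr => (hmC r ⟨hy.1.trans_lt hr.1, hr.2.le⟩).1
    rw [intervalIntegral.integral_const, smul_eq_mul,
      ← intervalIntegral.integral_interval_sub_left (hint _ hlast) (hint y hy), ← hJ, ← hJ] at this
    linarith

theorem exists_isLCStep_concaveHull_eq_integral_sq (ht : StrictMono t) (ht0 : t 0 = a)
    (ht1 : t (Fin.last n) = b) (hf : ∀ i, ∀ x ∈ Ioc (t i.castSucc) (t i.succ), f x = c i)
    (hc : ∀ i, 0 < c i) (hJ : ∀ x, J x = ∫ r in a..x, f r) :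
    ∃ σbar : ℝ → ℝ, IsLCStep σbar a b ∧ AntitoneOn σbar (Ioc a b) ∧
      (∀ x ∈ Ioc a b, 0 < σbar x) ∧
      ∀ x ∈ Ioc a b, concaveHull (Icc a b) J x = ∫ r in a..x, σbar r ^ 2 := by
  obtain ⟨m, C, hm, hJa, hJb⟩ := exists_affine_majorants_of_eq_integral ht.monotone ht0 ht1 hf hc hJ
  have hJc : ∀ i : Fin n, AffineOnIcc J (c i) (t i.castSucc) (t i.succ) := by
    rw [funext hJ, ← ht0]
    exact affineOnIcc_integral_of_eqOn_pieces ht.monotone hf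
  obtain ⟨σbar, hstep, hanti, hpos, hH⟩ :=
    exists_isLCStep_concaveHull_eq_of_affineOnIcc ht ht0 ht1 hJc hm hJa hJb
  refine ⟨σbar, hstep, hanti, hpos, fun x hx => ?_⟩
  rw [hH x hx, hJ a, intervalIntegral.integral_same, zero_add]

end PiecewiseAffine

theorem stmt_2_general
    (M : ℕ)
    (lam : Fin (M + 1) → ℝ) (hlam : StrictMono lam) (hlam0 : lam 0 = 0)
    (hlam1 : lam (Fin.last M) = 1)
    (σv : Fin M → ℝ) (hσv : ∀ i, 0 < σv i)
    (σ : ℝ → ℝ)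
    (hσdef : ∀ i : Fin M, ∀ s ∈ Set.Ioc (lam i.castSucc) (lam i.succ), σ s = σv i)
    (J : ℝ → ℝ) (hJ : ∀ s, J s = ∫ r in (0:ℝ)..s, (σ r) ^ 2)
    (hatJ : ℝ → ℝ)
    (hhatJ : ∀ s ∈ Set.Icc (0:ℝ) 1, hatJ s =
      sInf {y : ℝ | ∃ g : ℝ → ℝ, ConcaveOn ℝ (Set.Icc 0 1) g ∧
        (∀ t ∈ Set.Icc (0:ℝ) 1, J t ≤ g t) ∧ y = g s}) :
    ∃ σbar : ℝ → ℝ,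
      (IsLCStep σbar 0 1 ∧ AntitoneOn σbar (Set.Ioc 0 1) ∧
        (∀ s ∈ Set.Ioc (0:ℝ) 1, 0 < σbar s) ∧
        (∀ s ∈ Set.Ioc (0:ℝ) 1, hatJ s = ∫ r in (0:ℝ)..s, (σbar r) ^ 2)) ∧
      ∀ τ : ℝ → ℝ,
        (IsLCStep τ 0 1 ∧ AntitoneOn τ (Set.Ioc 0 1) ∧
          (∀ s ∈ Set.Ioc (0:ℝ) 1, 0 < τ s) ∧
          (∀ s ∈ Set.Ioc (0:ℝ) 1, hatJ s = ∫ r in (0:ℝ)..s, (τ r) ^ 2)) →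
        ∀ s ∈ Set.Ioc (0:ℝ) 1, τ s = σbar s := by
  obtain ⟨σbar, hstep, hanti, hpos, hint⟩ :=
    exists_isLCStep_concaveHull_eq_integral_sq hlam hlam0 hlam1 (c := fun i => σv i ^ 2)
      (fun i s hs => by rw [hσdef i s hs]) (fun i => pow_pos (hσv i) 2) hJ
  have hhat : ∀ s ∈ Ioc (0:ℝ) 1, hatJ s = ∫ r in (0:ℝ)..s, σbar r ^ 2 := fun s hs =>
    (hhatJ s (Ioc_subset_Icc_self hs)).trans (hint s hs)
  refine ⟨σbar, ⟨hstep, hanti, hpos, hhat⟩, fun τ ⟨hτ, _, hτpos, hτint⟩ s hs => ?_⟩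
  have hsq := (hτ.comp (· ^ 2)).eqOn_of_integral_eq (hstep.comp (· ^ 2))
    (fun x hx => (hτint x hx).symm.trans (hhat x hx)) hs
  exact (pow_left_inj₀ (hτpos s hs).le (hpos s hs).le two_ne_zero).1 hsq

/-- Existence and uniqueness of the effective variance `σ̄`: for a positive
left-continuous step function `σ` with `J(s) = ∫₀ˢ σ²`, and `Ĵ` the concave hull of `J`
on `[0,1]`, there is a unique non-increasing positive left-continuous step function `σ̄`
on `(0,1]` with `Ĵ(s) = ∫₀ˢ σ̄²(r) dr` for all `s ∈ (0,1]`. -/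
theorem stmt_2
    (M : ℕ) (hM : 0 < M)
    (lam : Fin (M + 1) → ℝ) (hlam : StrictMono lam) (hlam0 : lam 0 = 0)
    (hlam1 : lam (Fin.last M) = 1)
    (σv : Fin M → ℝ) (hσv : ∀ i, 0 < σv i)
    (σ : ℝ → ℝ) (hσ0 : σ 0 = σv ⟨0, hM⟩)
    (hσdef : ∀ i : Fin M, ∀ s ∈ Set.Ioc (lam i.castSucc) (lam i.succ), σ s = σv i)
    (J : ℝ → ℝ) (hJ : ∀ s, J s = ∫ r in (0:ℝ)..s, (σ r) ^ 2)
    (hatJ : ℝ → ℝ)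
    (hhatJ : ∀ s ∈ Set.Icc (0:ℝ) 1, hatJ s =
      sInf {y : ℝ | ∃ g : ℝ → ℝ, ConcaveOn ℝ (Set.Icc 0 1) g ∧
        (∀ t ∈ Set.Icc (0:ℝ) 1, J t ≤ g t) ∧ y = g s}) :
    ∃ σbar : ℝ → ℝ,
      (IsLCStep σbar 0 1 ∧ AntitoneOn σbar (Set.Ioc 0 1) ∧
        (∀ s ∈ Set.Ioc (0:ℝ) 1, 0 < σbar s) ∧
        (∀ s ∈ Set.Ioc (0:ℝ) 1, hatJ s = ∫ r in (0:ℝ)..s, (σbar r) ^ 2)) ∧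
      ∀ τ : ℝ → ℝ,
        (IsLCStep τ 0 1 ∧ AntitoneOn τ (Set.Ioc 0 1) ∧
          (∀ s ∈ Set.Ioc (0:ℝ) 1, 0 < τ s) ∧
          (∀ s ∈ Set.Ioc (0:ℝ) 1, hatJ s = ∫ r in (0:ℝ)..s, (τ r) ^ 2)) →
        ∀ s ∈ Set.Ioc (0:ℝ) 1, τ s = σbar s :=
  stmt_2_general M lam hlam hlam0 hlam1 σv hσv σ hσdef J hJ hatJ hhatJ

end
end

section
/- Let γ^{l-1} ≤ γ < γ(1+4ε) < γ^l where γ^j are the critical levels. Define the paths L*(s) = ∫₀ˢ σ²/σ̄ dr and L^{γ'}(s) = L*(s) for s ≤ λ^{l-1}, L^{γ'}(s) = L*(λ^{l-1}) + (∫_{λ^{l-1}}^s σ² dr / ∫_{λ^{l-1}}^1 σ² dr)·(γ' − L*(λ^{l-1})) for s > λ^{l-1}, with γ' = γ(1+4ε). Then for all 0 ≤ s₁ ≤ s₂ ≤ 1, L^{γ'}(s₂) − L^{γ'}(s₁) ≤ L*(s₂) − L*(s₁). -/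
/-!
Beyond `a = λ^{l-1}` the path `L^{γ'}` grows at rate `c σ²` with
`c = (γ' - L*(a)) / ∫_a^1 σ²`, while `L*` grows at rate `σ² / σ̄`. Since σ̄ is constant `σ̄_l` on
`(a, λ^l]`, the critical level is `γ^l = L*(a) + (∫_a^1 σ²) / σ̄_l`, so `γ' < γ^l` forces
`c ≤ 1 / σ̄_l ≤ 1 / σ̄` on `(a, 1]`, σ̄ being non-increasing. Before `a` the two paths agree.
-/

open MeasureTheory Set

namespace Monotone

variable {n : ℕ} {g : Fin (n + 1) → ℝ}

theorem exists_mem_Ioc_castSucc_succ (hg : Monotone g) {x : ℝ}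
    (hx : x ∈ Ioc (g 0) (g (Fin.last n))) : ∃ i : Fin n, x ∈ Ioc (g i.castSucc) (g i.succ) := by
  induction n with
  | zero => exact absurd hx.2 (not_le.mpr hx.1)
  | succ n ih =>
    by_cases hxn : x ≤ g (Fin.last n).castSucc
    · obtain ⟨i, hi⟩ := ih (g := g ∘ Fin.castSucc) (hg.comp Fin.strictMono_castSucc.monotone)
        ⟨hx.1, hxn⟩
      exact ⟨i.castSucc, hi⟩
    · exact ⟨Fin.last n, not_le.mp hxn, hx.2⟩

theorem exists_le_mem_Ioc_castSucc_succ (hg : Monotone g) {l : Fin n} {x : ℝ}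
    (hx : x ∈ Ioc (g l.castSucc) (g (Fin.last n))) :
    ∃ j, l ≤ j ∧ x ∈ Ioc (g j.castSucc) (g j.succ) := by
  obtain ⟨j, hj⟩ := hg.exists_mem_Ioc_castSucc_succ
    ⟨(hg (Fin.zero_le _)).trans_lt hx.1, hx.2⟩
  exact ⟨j, Fin.castSucc_lt_succ_iff.mp (hg.reflect_lt (hx.1.trans_le hj.2)), hj⟩

theorem intervalIntegrable_of_castSucc_succ {E : Type*} [NormedAddCommGroup E] {f : ℝ → E}
    (hg : Monotone g)
    (hf : ∀ i : Fin n, IntegrableOn f (Ioc (g i.castSucc) (g i.succ))) :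
    IntervalIntegrable f volume (g 0) (g (Fin.last n)) := by
  rw [intervalIntegrable_iff_integrableOn_Ioc_of_le (hg (Fin.zero_le _))]
  refine (integrableOn_finite_iUnion.mpr hf).mono_set fun x hx => ?_
  obtain ⟨i, hi⟩ := hg.exists_mem_Ioc_castSucc_succ hx
  exact mem_iUnion.mpr ⟨i, hi⟩

theorem intervalIntegrable_of_eqOn_castSucc_succ {E : Type*} [NormedAddCommGroup E]
    {f : ℝ → E} {v : Fin n → E} (hg : Monotone g)
    (hf : ∀ i, ∀ x ∈ Ioc (g i.castSucc) (g i.succ), f x = v i) :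
    IntervalIntegrable f volume (g 0) (g (Fin.last n)) :=
  hg.intervalIntegrable_of_castSucc_succ fun i => IntegrableOn.congr_fun
    (integrableOn_const measure_Ioc_lt_top.ne) (fun x hx => (hf i x hx).symm) measurableSet_Ioc

theorem intervalIntegrable_div_of_eqOn_castSucc_succ {f h : ℝ → ℝ} {v : Fin n → ℝ}
    (hg : Monotone g) (hf : IntervalIntegrable f volume (g 0) (g (Fin.last n)))
    (hh : ∀ i, ∀ x ∈ Ioc (g i.castSucc) (g i.succ), h x = v i) :
    IntervalIntegrable (fun x => f x / h x) volume (g 0) (g (Fin.last n)) :=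
  hg.intervalIntegrable_of_castSucc_succ fun i => IntegrableOn.congr_fun
    ((hf.1.mono_set (Ioc_subset_Ioc (hg (Fin.zero_le _)) (hg (Fin.le_last _)))).div_const (v i))
    (fun x hx => by rw [hh i x hx]) measurableSet_Ioc

end Monotone

theorem integral_div_comp_min_eq {f h : ℝ → ℝ} {a b v : ℝ} (ha : 0 ≤ a) (hab : a < b)
    (hb : b ≤ 1) (hv : ∀ x ∈ Ioc a b, h x = v) (hf : IntervalIntegrable f volume 0 1)
    (hfh : IntervalIntegrable (fun x => f x / h x) volume 0 a) :
    ∫ x in 0..1, f x / h (min x b) = (∫ x in 0..a, f x / h x) + (∫ x in a..1, f x) / v := by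
  have ha1 : a ≤ 1 := hab.le.trans hb
  have below : EqOn (fun x => f x / h x) (fun x => f x / h (min x b)) (uIoc 0 a) := by
    intro x hx
    rw [uIoc_of_le ha] at hx
    simp only [min_eq_left (hx.2.trans hab.le)]
  have above : EqOn (fun x => f x / v) (fun x => f x / h (min x b)) (uIoc a 1) := by
    intro x hx
    rw [uIoc_of_le ha1] at hx
    simp only [hv (min x b) ⟨lt_min hx.1 hab, min_le_right x b⟩]
  have hf' : IntervalIntegrable (fun x => f x / v) volume a 1 :=
    (hf.mono_set (uIcc_subset_uIcc_right (Icc_subset_uIcc ⟨ha, ha1⟩))).div_const v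
  rw [← intervalIntegral.integral_add_adjacent_intervals (hfh.congr below) (hf'.congr above),
    ← intervalIntegral.integral_congr_ae (Filter.Eventually.of_forall fun x hx => below hx),
    ← intervalIntegral.integral_congr_ae (Filter.Eventually.of_forall fun x hx => above hx),
    intervalIntegral.integral_div]

theorem sub_le_sub_of_mul_le_integrand {φ ψ L L' : ℝ → ℝ} {a c : ℝ}
    (hφ : IntervalIntegrable φ volume 0 1) (hψ : IntervalIntegrable ψ volume 0 1) (ha : 0 ≤ a)
    (hle : ∀ x ∈ Ioc a 1, c * ψ x ≤ φ x)
    (hL : ∀ s, L s = ∫ r in 0..s, φ r) (hL'₁ : ∀ s ≤ a, L' s = L s)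
    (hL'₂ : ∀ s, a < s → L' s = L a + c * ∫ r in a..s, ψ r)
    {s₁ s₂ : ℝ} (h₀ : 0 ≤ s₁) (h₁₂ : s₁ ≤ s₂) (h₂ : s₂ ≤ 1) :
    L' s₂ - L' s₁ ≤ L s₂ - L s₁ := by
  have sub : ∀ {f : ℝ → ℝ}, IntervalIntegrable f volume 0 1 → ∀ {t u v : ℝ}, 0 ≤ t → t ≤ 1 →
      0 ≤ u → u ≤ 1 → 0 ≤ v → v ≤ 1 → (∫ r in t..v, f r) - ∫ r in t..u, f r = ∫ r in u..v, f r :=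
    fun hf t u v ht ht1 hu hu1 hv hv1 => intervalIntegral.integral_interval_sub_left
      (hf.mono_set (uIcc_subset_uIcc (Icc_subset_uIcc ⟨ht, ht1⟩) (Icc_subset_uIcc ⟨hv, hv1⟩)))
      (hf.mono_set (uIcc_subset_uIcc (Icc_subset_uIcc ⟨ht, ht1⟩) (Icc_subset_uIcc ⟨hu, hu1⟩)))
  have mul_le : ∀ u, a ≤ u → u ≤ s₂ → c * ∫ r in u..s₂, ψ r ≤ ∫ r in u..s₂, φ r :=
    fun u hau hu => by
      have hu01 : uIcc u s₂ ⊆ uIcc 0 1 := uIcc_subset_uIcc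
        (Icc_subset_uIcc ⟨ha.trans hau, hu.trans h₂⟩)
        (Icc_subset_uIcc ⟨ha.trans (hau.trans hu), h₂⟩)
      rw [← intervalIntegral.integral_const_mul]
      exact intervalIntegral.integral_mono_on_of_le_Ioo hu ((hψ.mono_set hu01).const_mul c)
        (hφ.mono_set hu01) fun x hx => hle x ⟨hau.trans_lt hx.1, hx.2.le.trans h₂⟩
  have h₁ : s₁ ≤ 1 := h₁₂.trans h₂
  have h₀₂ : 0 ≤ s₂ := h₀.trans h₁₂
  rcases le_or_gt s₂ a with h₂a | ha₂
  · rw [hL'₁ s₂ h₂a, hL'₁ s₁ (h₁₂.trans h₂a)]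
  rcases le_or_gt s₁ a with h₁a | ha₁
  · calc L' s₂ - L' s₁ = L a - L s₁ + c * ∫ r in a..s₂, ψ r := by
          rw [hL'₂ s₂ ha₂, hL'₁ s₁ h₁a]; ring
      _ ≤ L a - L s₁ + ∫ r in a..s₂, φ r := by gcongr; exact mul_le a le_rfl ha₂.le
      _ = L s₂ - L s₁ := by
          rw [hL, hL, hL, ← sub hφ le_rfl zero_le_one ha (ha₂.le.trans h₂) h₀₂ h₂]; ring
  · calc L' s₂ - L' s₁ = c * ∫ r in s₁..s₂, ψ r := by
          rw [hL'₂ s₂ ha₂, hL'₂ s₁ ha₁, ← sub hψ ha (ha₁.le.trans h₁) h₀ h₁ h₀₂ h₂]; ring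
      _ ≤ ∫ r in s₁..s₂, φ r := mul_le s₁ ha₁.le h₁₂
      _ = L s₂ - L s₁ := by rw [hL, hL, sub hφ le_rfl zero_le_one h₀ h₁ h₀₂ h₂]

theorem stmt_7_general
    (M m : ℕ)
    (lam : Fin (M + 1) → ℝ) (hlam : StrictMono lam) (hlam0 : lam 0 = 0)
    (hlam1 : lam (Fin.last M) = 1)
    (σv : Fin M → ℝ)
    (σ : ℝ → ℝ)
    (hσdef : ∀ i : Fin M, ∀ s ∈ Set.Ioc (lam i.castSucc) (lam i.succ), σ s = σv i)
    (lamb : Fin (m + 1) → ℝ) (hlambmono : StrictMono lamb) (hlamb0 : lamb 0 = 0)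
    (hlamb1 : lamb (Fin.last m) = 1)
    (sbv : Fin m → ℝ) (hsbv : ∀ j, 0 < sbv j) (hsbvdec : StrictAnti sbv)
    (σbar : ℝ → ℝ)
    (hσbardef : ∀ j : Fin m, ∀ s ∈ Set.Ioc (lamb j.castSucc) (lamb j.succ), σbar s = sbv j)
    (l : Fin m) (γ ε : ℝ)
    (hγup : γ * (1 + 4 * ε) < ∫ s in (0:ℝ)..1, (σ s) ^ 2 / σbar (min s (lamb l.succ)))
    (Lstar Lg : ℝ → ℝ)
    (hLstar : ∀ s, Lstar s = ∫ r in (0:ℝ)..s, (σ r) ^ 2 / σbar r)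
    (hLg1 : ∀ s, s ≤ lamb l.castSucc → Lg s = Lstar s)
    (hLg2 : ∀ s, lamb l.castSucc < s →
      Lg s = Lstar (lamb l.castSucc) +
        (∫ r in (lamb l.castSucc)..s, (σ r) ^ 2) / (∫ r in (lamb l.castSucc)..1, (σ r) ^ 2) *
          (γ * (1 + 4 * ε) - Lstar (lamb l.castSucc))) :
    ∀ s₁ s₂ : ℝ, 0 ≤ s₁ → s₁ ≤ s₂ → s₂ ≤ 1 →
      Lg s₂ - Lg s₁ ≤ Lstar s₂ - Lstar s₁ := by
  intro s₁ s₂ h₀ h₁₂ h₂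
  set a := lamb l.castSucc
  have ha : 0 ≤ a := hlamb0 ▸ hlambmono.monotone (Fin.zero_le _)
  have hab : a < lamb l.succ := hlambmono Fin.castSucc_lt_succ
  have hb : lamb l.succ ≤ 1 := hlamb1 ▸ hlambmono.monotone (Fin.le_last _)
  have hσ2 : IntervalIntegrable (fun x => σ x ^ 2) volume 0 1 := by
    simpa only [hlam0, hlam1] using hlam.monotone.intervalIntegrable_of_eqOn_castSucc_succ
      (v := fun i => σv i ^ 2) fun i x hx => by rw [hσdef i x hx]
  have hσ2σbar : IntervalIntegrable (fun x => σ x ^ 2 / σbar x) volume 0 1 := by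
    simpa only [hlamb0, hlamb1] using
      hlambmono.monotone.intervalIntegrable_div_of_eqOn_castSucc_succ
        (by rwa [hlamb0, hlamb1]) hσbardef
  have hσbar : ∀ x ∈ Ioc a 1, 0 < σbar x ∧ σbar x ≤ sbv l := fun x hx => by
    obtain ⟨j, hlj, hj⟩ := hlambmono.monotone.exists_le_mem_Ioc_castSucc_succ (hlamb1 ▸ hx)
    rw [hσbardef j x hj]
    exact ⟨hsbv j, hsbvdec.antitone hlj⟩
  have hγl := integral_div_comp_min_eq ha hab hb (hσbardef l) hσ2
    (hσ2σbar.mono_set (uIcc_subset_uIcc_left (Icc_subset_uIcc ⟨ha, hab.le.trans hb⟩)))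
  rw [← hLstar] at hγl
  have hD : 0 ≤ ∫ r in a..1, σ r ^ 2 :=
    intervalIntegral.integral_nonneg (hab.le.trans hb) fun _ _ => sq_nonneg _
  set c := (γ * (1 + 4 * ε) - Lstar a) / ∫ r in a..1, σ r ^ 2
  have hslope : c ≤ 1 / sbv l :=
    div_le_of_le_mul₀ hD (one_div_nonneg.mpr (hsbv l).le) (by rw [one_div_mul_eq_div]; linarith)
  refine sub_le_sub_of_mul_le_integrand (c := c) hσ2σbar hσ2 ha (fun x hx => ?_) hLstar hLg1
    (fun s hs => by rw [hLg2 s hs]; ring) h₀ h₁₂ h₂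
  obtain ⟨hpos, hle⟩ := hσbar x hx
  calc _ ≤ 1 / sbv l * σ x ^ 2 := by gcongr
    _ ≤ 1 / σbar x * σ x ^ 2 := by gcongr
    _ = σ x ^ 2 / σbar x := one_div_mul_eq_div _ _

/-- Increments of the suboptimal path L^{γ'} (γ' = γ(1+4ε)) are dominated by the increments
of the optimal path L*(s) = ∫₀ˢ σ²/σ̄ dr, whenever γ^{l-1} ≤ γ < γ(1+4ε) < γ^l. -/
theorem stmt_7
    (M m : ℕ) (hM : 0 < M) (hm : 0 < m)
    (lam : Fin (M + 1) → ℝ) (hlam : StrictMono lam) (hlam0 : lam 0 = 0)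
    (hlam1 : lam (Fin.last M) = 1)
    (σv : Fin M → ℝ) (hσv : ∀ i, 0 < σv i)
    (σ : ℝ → ℝ) (hσ0 : σ 0 = σv ⟨0, hM⟩)
    (hσdef : ∀ i : Fin M, ∀ s ∈ Set.Ioc (lam i.castSucc) (lam i.succ), σ s = σv i)
    (lamb : Fin (m + 1) → ℝ) (hlambmono : StrictMono lamb) (hlamb0 : lamb 0 = 0)
    (hlamb1 : lamb (Fin.last m) = 1)
    (sbv : Fin m → ℝ) (hsbv : ∀ j, 0 < sbv j) (hsbvdec : StrictAnti sbv)
    (σbar : ℝ → ℝ) (hσbar0 : σbar 0 = sbv ⟨0, hm⟩)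
    (hσbardef : ∀ j : Fin m, ∀ s ∈ Set.Ioc (lamb j.castSucc) (lamb j.succ), σbar s = sbv j)
    (hsubgrid : ∀ j : Fin (m + 1), ∃ i : Fin (M + 1), lamb j = lam i)
    (hdom : ∀ t ∈ Set.Icc (0:ℝ) 1,
      (∫ r in (0:ℝ)..t, (σ r) ^ 2) ≤ ∫ r in (0:ℝ)..t, (σbar r) ^ 2)
    (hblock : ∀ j : Fin m, (∫ s in (lamb j.castSucc)..(lamb j.succ), (σ s) ^ 2)
      = (sbv j) ^ 2 * (lamb j.succ - lamb j.castSucc))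
    (l : Fin m) (γ ε : ℝ) (hε0 : 0 < ε)
    (hγlow : (if l.castSucc = 0 then (0:ℝ)
      else ∫ s in (0:ℝ)..1, (σ s) ^ 2 / σbar (min s (lamb l.castSucc))) ≤ γ)
    (hγup : γ * (1 + 4 * ε) < ∫ s in (0:ℝ)..1, (σ s) ^ 2 / σbar (min s (lamb l.succ)))
    (Lstar Lg : ℝ → ℝ)
    (hLstar : ∀ s, Lstar s = ∫ r in (0:ℝ)..s, (σ r) ^ 2 / σbar r)
    (hLg1 : ∀ s, s ≤ lamb l.castSucc → Lg s = Lstar s)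
    (hLg2 : ∀ s, lamb l.castSucc < s →
      Lg s = Lstar (lamb l.castSucc) +
        (∫ r in (lamb l.castSucc)..s, (σ r) ^ 2) / (∫ r in (lamb l.castSucc)..1, (σ r) ^ 2) *
          (γ * (1 + 4 * ε) - Lstar (lamb l.castSucc))) :
    ∀ s₁ s₂ : ℝ, 0 ≤ s₁ → s₁ ≤ s₂ → s₂ ≤ 1 →
      Lg s₂ - Lg s₁ ≤ Lstar s₂ - Lstar s₁ :=
  stmt_7_general M m lam hlam hlam0 hlam1 σv σ hσdef lamb hlambmono hlamb0 hlamb1 sbv hsbv hsbvdec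
    σbar hσbardef l γ ε hγup Lstar Lg hLstar hLg1 hLg2
end

section
/- Let p_j ∈ (0,1] for r+1 ≤ j ≤ K, and for a set V of size n let A_v = ∩_{j=r+1}^K A_{v,j} where the events A_{v,j} are independent over j for each fixed v with P(A_{v,j}) = p_j. Suppose for each pair v ≠ v' there is k = k(v,v') ∈ {r+1,…,K} such that A_{v,j} for j ∉ {k−1,k} and A_{v',j} for j ≥ k+1 are jointly independent. Then P(A_v ∩ A_{v'}) ≤ (∏_{j=r+1}^K p_j)² / (p_{k−1}·p_k²·∏_{j=r+1}^{k} p_{v',j}) ≤ P(A_v)P(A_{v'}) / (p_{k-1} p_k² ∏_{j=r+1}^{k} p_j). -/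
open MeasureTheory ProbabilityTheory

/-!
Drop from `A_v ∩ A_{v'}` every event outside the jointly independent family: the remaining
probability is `(∏_{j ≠ k-1, k} p_j) · ∏_{j > k} p_j`. Multiplying back the missing factors
`p_{k-1} p_k ≥ p_{k-1} p_k²` and `∏_{j ≤ k} p_j` gives at most `(∏_j p_j)²`, which is
`P(A_v) P(A_{v'})` by independence over `j`.
-/

namespace Finset

theorem prod_sdiff_mul_prod_le {α R : Type*} [CommSemiring R] [PartialOrder R] [IsOrderedRing R]
    [DecidableEq α] {s t : Finset α} {f : α → R} (hs : ∀ i ∈ s, 0 ≤ f i) (ht : ∀ i ∈ t, 0 ≤ f i)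
    (ht1 : ∀ i ∈ t, i ∉ s → f i ≤ 1) :
    (∏ i ∈ s \ t, f i) * ∏ i ∈ t, f i ≤ ∏ i ∈ s, f i := by
  calc (∏ i ∈ s \ t, f i) * ∏ i ∈ t, f i
      ≤ (∏ i ∈ s \ t, f i) * ∏ i ∈ s ∩ t, f i := by
        refine mul_le_mul_of_nonneg_left ?_ (prod_nonneg fun i hi => hs i (mem_sdiff.1 hi).1)
        exact prod_le_prod_of_subset_of_le_one inter_subset_right ht
          fun i hi his => ht1 i hi fun h => his (mem_inter.2 ⟨h, hi⟩)
    _ = ∏ i ∈ s, f i := by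
        rw [← sdiff_inter_self_left, prod_sdiff inter_subset_left]

theorem prod_Icc_sdiff_pair_mul_prod_Icc_le_sq_div {r k K : ℕ} (hrk : r + 1 ≤ k) (hkK : k ≤ K)
    {p : ℕ → ℝ} (hp : ∀ j, 0 < p j ∧ p j ≤ 1) :
    (∏ j ∈ Icc (r + 1) K \ {k - 1, k}, p j) * ∏ j ∈ Icc (k + 1) K, p j ≤
      (∏ j ∈ Icc (r + 1) K, p j) ^ 2 / (p (k - 1) * p k ^ 2 * ∏ j ∈ Icc (r + 1) k, p j) := by
  have hsplit : (∏ j ∈ Icc (r + 1) k, p j) * ∏ j ∈ Icc (k + 1) K, p j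
      = ∏ j ∈ Icc (r + 1) K, p j := by
    simp only [Icc_add_one_left_eq_Ioc]
    exact prod_Ioc_consecutive p (by omega) hkK
  have hpair : p (k - 1) * p k ^ 2 ≤ ∏ j ∈ {k - 1, k}, p j := by
    rw [prod_pair (by omega), sq, ← mul_assoc]
    exact mul_le_of_le_one_right (mul_pos (hp _).1 (hp _).1).le (hp k).2
  have hdrop : (∏ j ∈ Icc (r + 1) K \ {k - 1, k}, p j) * (p (k - 1) * p k ^ 2)
      ≤ ∏ j ∈ Icc (r + 1) K, p j :=
    (mul_le_mul_of_nonneg_left hpair (prod_nonneg fun j _ => (hp j).1.le)).trans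
      (prod_sdiff_mul_prod_le (fun j _ => (hp j).1.le) (fun j _ => (hp j).1.le)
        fun j _ _ => (hp j).2)
  have hP₁ : 0 < ∏ j ∈ Icc (r + 1) k, p j := prod_pos fun j _ => (hp j).1
  have hP₂ : 0 < ∏ j ∈ Icc (k + 1) K, p j := prod_pos fun j _ => (hp j).1
  have := (hp k).1
  have := (hp (k - 1)).1
  rw [le_div_iff₀ (by positivity)]
  calc _ = ((∏ j ∈ Icc (r + 1) K \ {k - 1, k}, p j) * (p (k - 1) * p k ^ 2))
        * ((∏ j ∈ Icc (r + 1) k, p j) * ∏ j ∈ Icc (k + 1) K, p j) := by ring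
    _ ≤ (∏ j ∈ Icc (r + 1) K, p j) * ∏ j ∈ Icc (r + 1) K, p j := by
        rw [hsplit]
        exact mul_le_mul_of_nonneg_right hdrop (hsplit ▸ (mul_pos hP₁ hP₂).le)
    _ = _ := (sq _).symm

end Finset

open Finset

section Independence

variable {Ω α : Type*} [MeasurableSpace Ω] {μ : Measure Ω}

theorem ProbabilityTheory.iIndepSet.toReal_measure_biInter {f : α → Set Ω} (h : iIndepSet f μ)
    (s : Finset α) {p : α → ℝ} (hp : ∀ i ∈ s, (μ (f i)).toReal = p i) :
    (μ (⋂ i ∈ s, f i)).toReal = ∏ i ∈ s, p i := by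
  rw [h.meas_biInter, ENNReal.toReal_prod]
  exact Finset.prod_congr rfl hp

theorem measure_biInter_inter_biInter_le_prod {A B : α → Set Ω} {P Q : α → Prop}
    {s sP sQ : Finset α} (hP : ∀ j, j ∈ sP ↔ P j) (hQ : ∀ j, j ∈ sQ ↔ Q j)
    (hsP : sP ⊆ s) (hsQ : sQ ⊆ s)
    (h : iIndepSet (Sum.elim (fun i : Subtype P => A i) (fun i : Subtype Q => B i)) μ) :
    μ ((⋂ j ∈ s, A j) ∩ ⋂ j ∈ s, B j) ≤ (∏ j ∈ sP, μ (A j)) * ∏ j ∈ sQ, μ (B j) := by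
  let _ := Fintype.subtype sP hP
  let _ := Fintype.subtype sQ hQ
  rw [Finset.prod_subtype sP hP, Finset.prod_subtype sQ hQ]
  calc μ ((⋂ j ∈ s, A j) ∩ ⋂ j ∈ s, B j)
      ≤ μ (⋂ x, Sum.elim (fun i : Subtype P => A i) (fun i : Subtype Q => B i) x) := by
        refine measure_mono fun ω hω => Set.mem_iInter.2 ?_
        rintro (i | i)
        · exact Set.mem_iInter₂.1 hω.1 i (hsP ((hP i).2 i.2))
        · exact Set.mem_iInter₂.1 hω.2 i (hsQ ((hQ i).2 i.2))
    _ = ∏ x, μ (Sum.elim (fun i : Subtype P => A i) (fun i : Subtype Q => B i) x) := by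
        simpa using h.meas_biInter Finset.univ
    _ = _ := Fintype.prod_sum_type _

end Independence

theorem stmt_17_general {Ω : Type*} [MeasurableSpace Ω] (μ : Measure Ω) [IsProbabilityMeasure μ]
    (r K k : ℕ) (hk : r + 1 ≤ k ∧ k ≤ K)
    (A B : ℕ → Set Ω)
    (p : ℕ → ℝ) (hppos : ∀ j, 0 < p j ∧ p j ≤ 1)
    (hp : ∀ j ∈ Finset.Icc (r + 1) K, (μ (A j)).toReal = p j ∧ (μ (B j)).toReal = p j)
    (hIndepA : iIndepSet A μ) (hIndepB : iIndepSet B μ)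
    (hJoint : iIndepSet
      (fun x : {j : ℕ // j ∈ Finset.Icc (r + 1) K ∧ j ≠ k - 1 ∧ j ≠ k} ⊕
          {j : ℕ // j ∈ Finset.Icc (k + 1) K} =>
        Sum.elim (fun a => A a.1) (fun b => B b.1) x) μ) :
    (μ ((⋂ j ∈ Finset.Icc (r + 1) K, A j) ∩ ⋂ j ∈ Finset.Icc (r + 1) K, B j)).toReal
      ≤ (∏ j ∈ Finset.Icc (r + 1) K, p j) ^ 2 /
          (p (k - 1) * (p k) ^ 2 * ∏ j ∈ Finset.Icc (r + 1) k, p j) ∧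
    (∏ j ∈ Finset.Icc (r + 1) K, p j) ^ 2 /
        (p (k - 1) * (p k) ^ 2 * ∏ j ∈ Finset.Icc (r + 1) k, p j)
      ≤ (μ (⋂ j ∈ Finset.Icc (r + 1) K, A j)).toReal *
          (μ (⋂ j ∈ Finset.Icc (r + 1) K, B j)).toReal /
          (p (k - 1) * (p k) ^ 2 * ∏ j ∈ Finset.Icc (r + 1) k, p j) := by
  have hhigh : Icc (k + 1) K ⊆ Icc (r + 1) K := Icc_subset_Icc_left (by omega)
  have hdropped := measure_biInter_inter_biInter_le_prod (sP := Icc (r + 1) K \ {k - 1, k})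
    (fun j => by simp) (fun j => Iff.rfl) sdiff_subset hhigh hJoint
  refine ⟨?_, le_of_eq ?_⟩
  · calc _ ≤ ((∏ j ∈ Icc (r + 1) K \ {k - 1, k}, μ (A j)) *
              ∏ j ∈ Icc (k + 1) K, μ (B j)).toReal :=
          ENNReal.toReal_mono
            (ENNReal.mul_ne_top (ENNReal.prod_ne_top fun _ _ => measure_ne_top _ _)
              (ENNReal.prod_ne_top fun _ _ => measure_ne_top _ _)) hdropped
      _ = (∏ j ∈ Icc (r + 1) K \ {k - 1, k}, p j) * ∏ j ∈ Icc (k + 1) K, p j := by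
          rw [ENNReal.toReal_mul, ENNReal.toReal_prod, ENNReal.toReal_prod]
          congr 1
          · exact prod_congr rfl fun j hj => (hp j (mem_sdiff.1 hj).1).1
          · exact prod_congr rfl fun j hj => (hp j (hhigh hj)).2
      _ ≤ _ := prod_Icc_sdiff_pair_mul_prod_Icc_le_sq_div hk.1 hk.2 hppos
  · rw [hIndepA.toReal_measure_biInter _ fun j hj => (hp j hj).1,
      hIndepB.toReal_measure_biInter _ fun j hj => (hp j hj).2, sq]

/-- Combinatorial core of the truncated second moment method: if `A_v = ∩_j A_{v,j}` and
`A_{v'} = ∩_j A_{v',j}` with `P(A_{v,j}) = P(A_{v',j}) = p_j`, the families are each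
independent over `j`, and the events `A_{v,j}` for `j ∉ {k−1,k}` together with the events
`A_{v',j}` for `j ≥ k+1` are jointly independent, then
`P(A_v ∩ A_{v'}) ≤ (∏ p_j)² / (p_{k−1} p_k² ∏_{j≤k} p_j) ≤ P(A_v)P(A_{v'}) / (p_{k−1} p_k² ∏_{j≤k} p_j)`. -/
theorem stmt_17 {Ω : Type*} [MeasurableSpace Ω] (μ : Measure Ω) [IsProbabilityMeasure μ]
    (r K k : ℕ) (hrK : r + 1 ≤ K) (hk : r + 1 ≤ k ∧ k ≤ K)
    (A B : ℕ → Set Ω)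
    (hMA : ∀ j, MeasurableSet (A j)) (hMB : ∀ j, MeasurableSet (B j))
    (p : ℕ → ℝ) (hppos : ∀ j, 0 < p j ∧ p j ≤ 1)
    (hp : ∀ j ∈ Finset.Icc (r + 1) K, (μ (A j)).toReal = p j ∧ (μ (B j)).toReal = p j)
    (hIndepA : iIndepSet A μ) (hIndepB : iIndepSet B μ)
    (hJoint : iIndepSet
      (fun x : {j : ℕ // j ∈ Finset.Icc (r + 1) K ∧ j ≠ k - 1 ∧ j ≠ k} ⊕
          {j : ℕ // j ∈ Finset.Icc (k + 1) K} =>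
        Sum.elim (fun a => A a.1) (fun b => B b.1) x) μ) :
    (μ ((⋂ j ∈ Finset.Icc (r + 1) K, A j) ∩ ⋂ j ∈ Finset.Icc (r + 1) K, B j)).toReal
      ≤ (∏ j ∈ Finset.Icc (r + 1) K, p j) ^ 2 /
          (p (k - 1) * (p k) ^ 2 * ∏ j ∈ Finset.Icc (r + 1) k, p j) ∧
    (∏ j ∈ Finset.Icc (r + 1) K, p j) ^ 2 /
        (p (k - 1) * (p k) ^ 2 * ∏ j ∈ Finset.Icc (r + 1) k, p j)
      ≤ (μ (⋂ j ∈ Finset.Icc (r + 1) K, A j)).toReal *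
          (μ (⋂ j ∈ Finset.Icc (r + 1) K, B j)).toReal /
          (p (k - 1) * (p k) ^ 2 * ∏ j ∈ Finset.Icc (r + 1) k, p j) :=
  stmt_17_general μ r K k hk A B p hppos hp hIndepA hIndepB hJoint
end
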